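/- arXiv:2010.12356 — 5 statements merged into one kernel-verified Lean document; each statement's English description precedes it below -/
import Mathlib

section
/- Let s : (R₀,∞) → (0,∞) be convex and differentiable with r < s(r) ≤ r² for all r ≥ R₀ and lim_{r→∞} s(r)/r = ∞. Then s(r) ≤ 2·s(r-1) for all sufficiently large r. -/
open Set Filter

/-
Convexity bounds the increment `s r - s (r - 1)` by the slope of `s` on `[r, 2r]`, which is at
most `s (2r) / r ≤ 4r`. Superlinear growth gives `s (r - 1) ≥ 5 (r - 1) ≥ 4r` for large `r`, so
`s r ≤ s (r - 1) + 4r ≤ 2 s (r - 1)`.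
-/

lemma ConvexOn.sub_le_four_mul {D : Set ℝ} {s : ℝ → ℝ} {r : ℝ} (hconv : ConvexOn ℝ D s)
    (hr₁ : r - 1 ∈ D) (hr₂ : 2 * r ∈ D) (hr : 0 < r) (hs : 0 ≤ s r)
    (hsq : s (2 * r) ≤ (2 * r) ^ 2) :
    s r - s (r - 1) ≤ 4 * r := by
  have hslope : (s r - s (r - 1)) / (r - (r - 1)) ≤ (s (2 * r) - s r) / (2 * r - r) :=
    hconv.slope_mono_adjacent hr₁ hr₂ (by linarith) (by linarith)
  have hchord : (s (2 * r) - s r) / r ≤ 4 * r := by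
    rw [div_le_iff₀ hr]
    nlinarith
  rw [sub_sub_cancel, div_one, show 2 * r - r = r by ring] at hslope
  exact hslope.trans hchord

theorem convex_doubling_general (R₀ : ℝ) (s : ℝ → ℝ)
    (hconv : ConvexOn ℝ (Ioi R₀) s)
    (hbound : ∀ r ≥ R₀, r < s r ∧ s r ≤ r ^ 2)
    (hlim : Tendsto (fun r => s r / r) atTop atTop) :
    ∀ᶠ r in atTop, s r ≤ 2 * s (r - 1) := by
  obtain ⟨X, hX⟩ := eventually_atTop.mp (tendsto_atTop.mp hlim 5)
  filter_upwards [eventually_ge_atTop (X + 1), eventually_gt_atTop (R₀ + 1),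
    eventually_ge_atTop 5] with r hrX hrR hr5
  have hincr : s r - s (r - 1) ≤ 4 * r :=
    hconv.sub_le_four_mul (show R₀ < r - 1 by linarith) (show R₀ < 2 * r by linarith)
      (by linarith) (by linarith [(hbound r (by linarith)).1]) (hbound (2 * r) (by linarith)).2
  have hgrowth : 5 * (r - 1) ≤ s (r - 1) :=
    (le_div_iff₀ (by linarith)).mp (hX (r - 1) (by linarith))
  linarith

/-- If `s` is convex and differentiable on `(R₀,∞)` with `r < s(r) ≤ r²` and
`s(r)/r → ∞`, then `s(r) ≤ 2 s(r-1)` for all sufficiently large `r`. -/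
theorem convex_doubling (R₀ : ℝ) (s : ℝ → ℝ)
    (hconv : ConvexOn ℝ (Ioi R₀) s)
    (hdiff : DifferentiableOn ℝ s (Ioi R₀))
    (hbound : ∀ r ≥ R₀, r < s r ∧ s r ≤ r ^ 2)
    (hlim : Tendsto (fun r => s r / r) atTop atTop) :
    ∀ᶠ r in atTop, s r ≤ 2 * s (r - 1) :=
  convex_doubling_general R₀ s hconv hbound hlim
end

section
/- Let s : (R₀,∞) → (0,∞) be convex with r < s(r) ≤ r² for all r ≥ R₀. If liminf_{r→∞} s(r)/r = 1, then lim_{r→∞} s(r)/r = 1. -/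
open Set Filter Topology

/-!
The secant slope `slope s a r` of a convex function from a fixed base point `a` is monotone in `r`,
hence tends either to a finite limit `L` or to `+∞`; since `s r / r = slope s a r * (1 - a / r) + s a / r`,
so does `s r / r`. A limit `+∞` is excluded because the real `liminf` of a function tending to `+∞`
is the junk value `0`, and a finite limit equals the liminf, so it is `1`.
-/

theorem MonotoneOn.tendsto_atTop_or_tendsto_nhds {α β : Type*} [Preorder α] [IsDirectedOrder α]
    [NoMaxOrder α] [ConditionallyCompleteLinearOrder β] [TopologicalSpace β] [OrderTopology β]
    {g : α → β} {a : α} (hg : MonotoneOn g (Ioi a)) :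
    Tendsto g atTop atTop ∨ ∃ L, Tendsto g atTop (𝓝 L) := by
  have hmono : Monotone fun r : Ioi a => g r := fun x y hxy => hg x.2 y.2 hxy
  rcases tendsto_atTop_of_monotone hmono with htop | ⟨L, hL⟩
  · exact .inl (tendsto_comp_val_Ioi_atTop.1 htop)
  · exact .inr ⟨L, tendsto_comp_val_Ioi_atTop.1 hL⟩

theorem div_self_eventuallyEq_slope (f : ℝ → ℝ) (a : ℝ) :
    (fun r => f r / r) =ᶠ[atTop] fun r => slope f a r * (1 - a / r) + f a / r := by
  filter_upwards [eventually_gt_atTop (max a 0)] with r hr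
  have hra : r - a ≠ 0 := sub_ne_zero.2 (lt_of_le_of_lt (le_max_left _ _) hr).ne'
  have hr0 : r ≠ 0 := (lt_of_le_of_lt (le_max_right _ _) hr).ne'
  rw [slope_def_field]
  field_simp
  ring

theorem ConvexOn.tendsto_div_self_atTop_or_tendsto_nhds {R₀ : ℝ} {f : ℝ → ℝ}
    (hf : ConvexOn ℝ (Ioi R₀) f) :
    Tendsto (fun r => f r / r) atTop atTop ∨ ∃ L, Tendsto (fun r => f r / r) atTop (𝓝 L) := by
  set a := R₀ + 1
  have hslope : MonotoneOn (slope f a) (Ioi a) :=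
    (hf.slope_mono (lt_add_one R₀)).mono fun r hr =>
      ⟨(lt_add_one R₀).trans hr, ne_of_gt hr⟩
  have hfactor : Tendsto (fun r : ℝ => 1 - a / r) atTop (𝓝 1) := by
    simpa using (tendsto_const_nhds (x := (1 : ℝ))).sub (tendsto_const_nhds.div_atTop tendsto_id)
  have hconst : Tendsto (fun r : ℝ => f a / r) atTop (𝓝 0) :=
    tendsto_const_nhds.div_atTop tendsto_id
  rcases hslope.tendsto_atTop_or_tendsto_nhds with htop | ⟨L, hL⟩
  · exact .inl <| ((htop.atTop_mul_pos one_pos hfactor).atTop_add hconst).congr'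
      (div_self_eventuallyEq_slope f a).symm
  · refine .inr ⟨L, ?_⟩
    simpa using ((hL.mul hfactor).add hconst).congr' (div_self_eventuallyEq_slope f a).symm

theorem Real.liminf_eq_zero_of_tendsto_atTop {α : Type*} {l : Filter α} {u : α → ℝ}
    (hu : Tendsto u l atTop) : liminf u l = 0 := by
  rw [liminf_eq, ← Real.sSup_univ]
  exact congrArg sSup (eq_univ_of_forall fun b => tendsto_atTop.1 hu b)

theorem convex_liminf_one_general (R₀ : ℝ) (s : ℝ → ℝ)
    (hconv : ConvexOn ℝ (Ioi R₀) s)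
    (hliminf : Filter.liminf (fun r => s r / r) atTop = 1) :
    Tendsto (fun r => s r / r) atTop (nhds 1) := by
  rcases hconv.tendsto_div_self_atTop_or_tendsto_nhds with htop | ⟨L, hL⟩
  · rw [Real.liminf_eq_zero_of_tendsto_atTop htop] at hliminf
    exact absurd hliminf zero_ne_one
  · rwa [← hliminf, hL.liminf_eq]

/-- If `s` is convex on `(R₀,∞)` with `r < s(r) ≤ r²` and
`liminf s(r)/r = 1`, then `s(r)/r → 1`. -/
theorem convex_liminf_one (R₀ : ℝ) (s : ℝ → ℝ)
    (hconv : ConvexOn ℝ (Ioi R₀) s)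
    (hbound : ∀ r ≥ R₀, r < s r ∧ s r ≤ r ^ 2)
    (hliminf : Filter.liminf (fun r => s r / r) atTop = 1) :
    Tendsto (fun r => s r / r) atTop (nhds 1) :=
  convex_liminf_one_general R₀ s hconv hliminf
end

section
/- Let φ : (R₀,∞) → (0,∞) be non-decreasing and unbounded with log r ≤ φ(r) ≤ r for all r ≥ R₀. Suppose β_φ = limsup_{r→∞} (log log r)/(log φ(r)) > 0 and the limit ζ_φ = lim_{r→∞} (log φ(r))/(log φ(r²)) exists. Then ζ_φ = 1, and hence for any non-decreasing s with r < s(r) ≤ r², α_{φ,s} = liminf_{r→∞} (log φ(r))/(log φ(s(r))) = 1. -/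
open Set Filter Real

private lemma exp_one_lt_three : Real.exp 1 < 3 :=
  Real.exp_one_lt_d9.trans (by norm_num)

private lemma one_lt_log_of_three_le {r : ℝ} (hr : 3 ≤ r) : 1 < Real.log r := by
  rw [Real.lt_log_iff_exp_lt (by linarith)]
  exact Real.exp_one_lt_three.trans_le hr

/-- Key growth lemma: if `log φ(r) ≤ q · log φ(r²)` for all `r ≥ T` with `q < 1`,
then `log log r / log φ(r) → 0`. -/
private lemma growth_aux (R₀ : ℝ) (φ : ℝ → ℝ) (q T : ℝ)
    (hq0 : 0 < q) (hq1 : q < 1) (hT3 : 3 ≤ T) (hTR : R₀ < T)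
    (hmono : MonotoneOn φ (Ioi R₀))
    (hc : 0 < Real.log (φ T)) (hφT : 1 < φ T)
    (hstep : ∀ r, T ≤ r → Real.log (φ r) ≤ q * Real.log (φ (r ^ 2))) :
    Tendsto (fun r => Real.log (Real.log r) / Real.log (φ r)) atTop (nhds 0) := by
  set c := Real.log (φ T) with hcdef
  have hT1 : (1 : ℝ) < T := by linarith
  have hT0 : (0 : ℝ) < T := by linarith
  -- T^(2^n) ≥ T
  have hTpow : ∀ n : ℕ, T ≤ T ^ (2 ^ n) := fun n =>
    le_self_pow₀ hT1.le (by positivity)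
  -- iteration
  have hiter : ∀ n : ℕ, c / q ^ n ≤ Real.log (φ (T ^ (2 ^ n))) := by
    intro n
    induction n with
    | zero => simp [hcdef]
    | succ n ih =>
      have h1 := hstep (T ^ (2 ^ n)) (hTpow n)
      have h2 : (T ^ (2 ^ n)) ^ 2 = T ^ (2 ^ (n + 1)) := by
        rw [← pow_mul, pow_succ]
      rw [h2] at h1
      have h3 : c / q ^ n ≤ q * Real.log (φ (T ^ (2 ^ (n + 1)))) := ih.trans h1
      rw [pow_succ]
      rw [div_mul_eq_div_div]
      rw [div_le_iff₀ hq0] at *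
      linarith [h3]
  -- monotone bound
  have hlb : ∀ n : ℕ, ∀ r : ℝ, T ^ (2 ^ n) ≤ r → c / q ^ n ≤ Real.log (φ r) := by
    intro n r hr
    refine (hiter n).trans ?_
    have hmem1 : T ^ (2 ^ n) ∈ Ioi R₀ := by
      have := hTpow n; simp only [mem_Ioi]; linarith
    have hmem2 : r ∈ Ioi R₀ := by
      have := hTpow n; simp only [mem_Ioi]; linarith
    have hφpos : 0 < φ (T ^ (2 ^ n)) := by
      have : φ T ≤ φ (T ^ (2 ^ n)) :=
        hmono (by simp only [mem_Ioi]; linarith) hmem1 (hTpow n)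
      linarith
    exact Real.log_le_log hφpos (hmono hmem1 hmem2 hr)
  -- positivity of c/q^n
  have hcq : ∀ n : ℕ, 0 < c / q ^ n := fun n => div_pos hc (pow_pos hq0 n)
  -- the sequence bound tends to 0
  set L := Real.log (Real.log T) with hLdef
  have hL0 : 0 ≤ L := Real.log_nonneg (one_lt_log_of_three_le hT3).le
  have hg : Tendsto (fun n : ℕ => (((n : ℝ) + 1) * Real.log 2 + L) * q ^ n / c)
      atTop (nhds 0) := by
    have h1 : Tendsto (fun n : ℕ => (n : ℝ) * q ^ n) atTop (nhds 0) := by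
      simpa using tendsto_pow_const_mul_const_pow_of_lt_one 1 hq0.le hq1
    have h2 : Tendsto (fun n : ℕ => q ^ n) atTop (nhds 0) :=
      tendsto_pow_atTop_nhds_zero_of_lt_one hq0.le hq1
    have h3 := ((h1.const_mul (Real.log 2)).add (h2.const_mul (Real.log 2 + L))).div_const c
    have : (fun n : ℕ => (Real.log 2 * ((n : ℝ) * q ^ n) + (Real.log 2 + L) * q ^ n) / c)
        = fun n : ℕ => (((n : ℝ) + 1) * Real.log 2 + L) * q ^ n / c := by
      funext n; ring
    rw [this] at h3
    simpa using h3
  -- now the epsilon-N argument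
  rw [Metric.tendsto_atTop]
  intro ε hε
  rw [Metric.tendsto_atTop] at hg
  obtain ⟨N, hN⟩ := hg ε hε
  refine ⟨T ^ (2 ^ N), fun r hr => ?_⟩
  have hrT : T ≤ r := (hTpow N).trans hr
  -- find the dyadic scale of r
  have hex : ∃ m : ℕ, r < T ^ (2 ^ m) := by
    obtain ⟨m, hm⟩ := pow_unbounded_of_one_lt r hT1
    exact ⟨m, hm.trans_le (pow_le_pow_right₀ hT1.le (Nat.lt_two_pow_self (n := m)).le)⟩
  have h0 : ¬ r < T ^ (2 ^ 0) := by simp only [pow_zero, pow_one]; linarith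
  have hfind : Nat.find hex ≠ 0 := fun h => h0 (h ▸ Nat.find_spec hex)
  obtain ⟨n, hn⟩ : ∃ n, Nat.find hex = n + 1 := ⟨Nat.find hex - 1, (Nat.succ_pred_eq_of_pos
    (Nat.pos_of_ne_zero hfind)).symm⟩
  have hlow : T ^ (2 ^ n) ≤ r := by
    have := Nat.find_min hex (by omega : n < Nat.find hex)
    push_neg at this; exact this
  have hhigh : r < T ^ (2 ^ (n + 1)) := hn ▸ Nat.find_spec hex
  have hnN : N ≤ n := by
    by_contra h
    push_neg at h
    have : T ^ (2 ^ (n + 1)) ≤ T ^ (2 ^ N) :=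
      pow_le_pow_right₀ hT1.le (Nat.pow_le_pow_right (by norm_num) h)
    linarith [hhigh.trans_le (this.trans hr)]
  -- bounds
  have hr0 : (0 : ℝ) < r := by linarith
  have hlogr1 : 1 < Real.log r := one_lt_log_of_three_le (hT3.trans hrT)
  have hlogT : 0 < Real.log T := by linarith [one_lt_log_of_three_le hT3]
  have hden : c / q ^ n ≤ Real.log (φ r) := hlb n r hlow
  have hdenpos : 0 < Real.log (φ r) := lt_of_lt_of_le (hcq n) hden
  have hnum : Real.log (Real.log r) ≤ ((n : ℝ) + 1) * Real.log 2 + L := by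
    have h1 : Real.log r < (2 ^ (n + 1) : ℕ) * Real.log T := by
      have := Real.log_lt_log hr0 hhigh
      rwa [Real.log_pow] at this
    have h2 : Real.log (Real.log r) ≤ Real.log ((2 ^ (n + 1) : ℕ) * Real.log T) :=
      Real.log_le_log (by linarith) h1.le
    have h3 : Real.log ((2 ^ (n + 1) : ℕ) * Real.log T)
        = ((n : ℝ) + 1) * Real.log 2 + L := by
      rw [Real.log_mul (by positivity) hlogT.ne', hLdef]
      push_cast
      rw [Real.log_pow]
      push_cast
      ring
    linarith
  have hnumpos : 0 ≤ Real.log (Real.log r) := Real.log_nonneg hlogr1.le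
  have hAnn : 0 ≤ ((n : ℝ) + 1) * Real.log 2 + L := by
    have := Real.log_pos (by norm_num : (1:ℝ) < 2)
    positivity
  have hbound : Real.log (Real.log r) / Real.log (φ r)
      ≤ (((n : ℝ) + 1) * Real.log 2 + L) * q ^ n / c := by
    have := div_le_div₀ hAnn hnum (hcq n) hden
    rwa [div_div_eq_mul_div] at this
  have hgn := hN n hnN
  rw [Real.dist_eq, sub_zero] at hgn ⊢
  rw [abs_of_nonneg (div_nonneg hnumpos hdenpos.le)]
  calc Real.log (Real.log r) / Real.log (φ r)
      ≤ (((n : ℝ) + 1) * Real.log 2 + L) * q ^ n / c := hbound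
    _ ≤ |(((n : ℝ) + 1) * Real.log 2 + L) * q ^ n / c| := le_abs_self _
    _ < ε := hgn

/-- If `β_φ > 0` and the limit `ζ_φ` exists, then `ζ_φ = 1` and hence
`α_{φ,s} = 1` for any admissible `s`. -/
theorem beta_pos_implies_zeta_one (R₀ : ℝ) (φ : ℝ → ℝ) (ζ : ℝ)
    (hφbound : ∀ r ≥ R₀, 0 < φ r ∧ log r ≤ φ r ∧ φ r ≤ r)
    (hφmono : MonotoneOn φ (Ioi R₀))
    (hφunb : Tendsto φ atTop atTop)
    (hβ : 0 < Filter.limsup (fun r => log (log r) / log (φ r)) atTop)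
    (hζ : Tendsto (fun r => log (φ r) / log (φ (r ^ 2))) atTop (nhds ζ)) :
    ζ = 1 ∧
    ∀ s : ℝ → ℝ, MonotoneOn s (Ioi R₀) → (∀ r ≥ R₀, r < s r ∧ s r ≤ r ^ 2) →
      Filter.liminf (fun r => log (φ r) / log (φ (s r))) atTop = 1 := by
  set M : ℝ := max (R₀ + 1) 3 with hMdef
  have hM3 : (3 : ℝ) ≤ M := le_max_right _ _
  have hMR : R₀ < M := by have := le_max_left (R₀ + 1) 3; linarith
  -- basic facts for r ≥ M
  have hbasic : ∀ r : ℝ, M ≤ r → R₀ < r ∧ 1 < φ r ∧ 0 < log (φ r) := by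
    intro r hr
    have hrR : R₀ < r := lt_of_lt_of_le hMR hr
    obtain ⟨h1, h2, h3⟩ := hφbound r hrR.le
    have hlog : 1 < log r := one_lt_log_of_three_le (hM3.trans hr)
    have hφ1 : 1 < φ r := lt_of_lt_of_le hlog h2
    exact ⟨hrR, hφ1, Real.log_pos hφ1⟩
  -- squares
  have hsq : ∀ r : ℝ, M ≤ r → r ≤ r ^ 2 ∧ 0 < log (φ (r ^ 2)) ∧
      log (φ r) ≤ log (φ (r ^ 2)) := by
    intro r hr
    obtain ⟨hrR, hφ1, hlog⟩ := hbasic r hr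
    have hr1 : (1 : ℝ) ≤ r := by linarith [hM3.trans hr]
    have hrsq : r ≤ r ^ 2 := le_self_pow₀ hr1 two_ne_zero
    have hle : φ r ≤ φ (r ^ 2) :=
      hφmono (mem_Ioi.mpr hrR) (mem_Ioi.mpr (lt_of_lt_of_le hrR hrsq)) hrsq
    have := Real.log_le_log (by linarith : (0:ℝ) < φ r) hle
    exact ⟨hrsq, lt_of_lt_of_le hlog this, this⟩
  -- eventual bound: ratio ≤ 1
  have hev1 : ∀ᶠ r in atTop, log (φ r) / log (φ (r ^ 2)) ≤ 1 := by
    filter_upwards [eventually_ge_atTop M] with r hr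
    obtain ⟨_, hpos, hle⟩ := hsq r hr
    exact div_le_one_of_le₀ hle hpos.le
  have hev0 : ∀ᶠ r in atTop, 0 ≤ log (φ r) / log (φ (r ^ 2)) := by
    filter_upwards [eventually_ge_atTop M] with r hr
    obtain ⟨_, hpos, _⟩ := hsq r hr
    obtain ⟨_, _, hlog⟩ := hbasic r hr
    positivity
  have hζle : ζ ≤ 1 := le_of_tendsto hζ hev1
  have hζge0 : 0 ≤ ζ := ge_of_tendsto hζ hev0
  -- ζ = 1
  have hζ1 : ζ = 1 := by
    by_contra hne
    have hζlt : ζ < 1 := lt_of_le_of_ne hζle hne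
    set q : ℝ := (ζ + 1) / 2 with hqdef
    have hq0 : 0 < q := by rw [hqdef]; linarith
    have hq1 : q < 1 := by rw [hqdef]; linarith
    have hζq : ζ < q := by rw [hqdef]; linarith
    have hevq : ∀ᶠ r in atTop, log (φ r) / log (φ (r ^ 2)) < q :=
      hζ.eventually (gt_mem_nhds hζq)
    obtain ⟨T₀, hT₀⟩ := eventually_atTop.mp hevq
    set T : ℝ := max T₀ M with hTdef
    have hTM : M ≤ T := le_max_right _ _
    have hT3 : (3 : ℝ) ≤ T := hM3.trans hTM
    have hTR : R₀ < T := lt_of_lt_of_le hMR hTM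
    have hstep : ∀ r, T ≤ r → log (φ r) ≤ q * log (φ (r ^ 2)) := by
      intro r hr
      have h1 := hT₀ r ((le_max_left _ _).trans hr)
      have h2 := (hsq r (hTM.trans hr)).2.1
      rw [div_lt_iff₀ h2] at h1
      linarith
    have hc : 0 < log (φ T) := (hbasic T hTM).2.2
    have htend := growth_aux R₀ φ q T hq0 hq1 hT3 hTR hφmono hc (hbasic T hTM).2.1 hstep
    rw [htend.limsup_eq] at hβ
    exact lt_irrefl 0 hβ
  refine ⟨hζ1, fun s hsmono hsbound => ?_⟩
  -- eventual inequalities for s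
  have hevs : ∀ᶠ r in atTop,
      log (φ r) / log (φ (r ^ 2)) ≤ log (φ r) / log (φ (s r)) ∧
      log (φ r) / log (φ (s r)) ≤ 1 ∧
      0 ≤ log (φ r) / log (φ (r ^ 2)) := by
    filter_upwards [eventually_ge_atTop M] with r hr
    obtain ⟨hrR, hφ1, hlogφ⟩ := hbasic r hr
    obtain ⟨hrsq, hsqpos, hsqle⟩ := hsq r hr
    obtain ⟨hrs, hsr2⟩ := hsbound r hrR.le
    have hsR : R₀ < s r := lt_trans hrR hrs
    have hmem_r : r ∈ Ioi R₀ := mem_Ioi.mpr hrR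
    have hmem_s : s r ∈ Ioi R₀ := mem_Ioi.mpr hsR
    have hmem_sq : r ^ 2 ∈ Ioi R₀ := mem_Ioi.mpr (lt_of_lt_of_le hrR hrsq)
    have h1 : φ r ≤ φ (s r) := hφmono hmem_r hmem_s hrs.le
    have h2 : φ (s r) ≤ φ (r ^ 2) := hφmono hmem_s hmem_sq hsr2
    have hφrpos : (0 : ℝ) < φ r := by linarith
    have hl1 : log (φ r) ≤ log (φ (s r)) := Real.log_le_log hφrpos h1
    have hl2 : log (φ (s r)) ≤ log (φ (r ^ 2)) :=
      Real.log_le_log (by linarith) h2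
    have hspos : 0 < log (φ (s r)) := lt_of_lt_of_le hlogφ hl1
    refine ⟨?_, div_le_one_of_le₀ hl1 hspos.le, by positivity⟩
    exact div_le_div_of_nonneg_left hlogφ.le hspos hl2
  have hliminf_low : (1 : ℝ) ≤ liminf (fun r => log (φ r) / log (φ (s r))) atTop := by
    have h1 : liminf (fun r => log (φ r) / log (φ (r ^ 2))) atTop = 1 := by
      rw [← hζ1]; exact hζ.liminf_eq
    rw [← h1]
    refine liminf_le_liminf (hevs.mono fun r h => h.1) ?_ ?_
    · exact ⟨0, by simpa using hevs.mono fun r h => h.2.2⟩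
    · exact isCoboundedUnder_ge_of_eventually_le atTop (hevs.mono fun r h => h.2.1)
  have hliminf_high : liminf (fun r => log (φ r) / log (φ (s r))) atTop ≤ 1 := by
    have h1 : liminf (fun _ : ℝ => (1 : ℝ)) atTop = 1 := liminf_const 1
    rw [← h1]
    refine liminf_le_liminf (hevs.mono fun r h => h.2.1) ?_ ?_
    · refine ⟨0, ?_⟩
      have : ∀ᶠ r in atTop, (0:ℝ) ≤ log (φ r) / log (φ (s r)) := by
        filter_upwards [hevs] with r h
        exact h.2.2.trans h.1
      simpa using this
    · exact isCoboundedUnder_ge_of_le atTop fun _ => le_refl 1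
  linarith
end

section
/- Let {z_n} be a sequence of points with |z_n| → ∞, and let n(r) denote the number of points with |z_n| ≤ r. Let φ be non-decreasing, unbounded, and differentiable with log r ≤ φ(r) ≤ r. Then for μ > 0, the sum Σ_n 1/φ(|z_n|)^μ converges if and only if the integral ∫^∞ φ'(t)·n(t)/φ(t)^{μ+1} dt converges. Consequently, the φ-order of n(r) equals the φ-exponent of convergence of {z_n}. -/
open Set Filter Real MeasureTheory

noncomputable def countingFun (z : ℕ → ℂ) (r : ℝ) : ℝ :=
  (Nat.card {n : ℕ | ‖z n‖ ≤ r} : ℝ)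

/-!
Writing `n(t) = ∑ₙ 𝟙[|zₙ| ≤ t]` and integrating term by term, for `a > R₀`
`∫ₐ^∞ φ' n / φ^(μ+1) = ∑ₙ ∫_{max(|zₙ|, a)}^∞ φ' / φ^(μ+1) = ∑ₙ φ(max(|zₙ|, a))^(-μ) / μ`,
a series that agrees with `μ⁻¹ ∑ₙ φ(|zₙ|)^(-μ)` up to finitely many terms.

For the orders: since `n` is nondecreasing, `n(r) φ(r)^(-μ) / μ = n(r) ∫ᵣ^∞ φ' / φ^(μ+1)` is
at most the convergent integral, so `n(r) = O(φ(r)^μ)` for every convergence exponent `μ`;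
conversely `n(r) ≤ φ(r)^c` makes the integral converge for every `μ > c`, by comparison
with `φ' / φ^(μ-c+1)`.
-/

lemma MonotoneOn.deriv_nonneg_of_isOpen {f : ℝ → ℝ} {s : Set ℝ} (hf : MonotoneOn f s)
    (hs : IsOpen s) {x : ℝ} (hx : x ∈ s) : 0 ≤ deriv f x :=
  (derivWithin_of_isOpen (f := f) hs hx).symm ▸ hf.derivWithin_nonneg

lemma summable_iff_tsum_ofReal_ne_top {ι : Type*} {f : ι → ℝ} (hf : ∀ i, 0 ≤ f i) :
    Summable f ↔ ∑' i, ENNReal.ofReal (f i) ≠ ⊤ :=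
  ⟨Summable.tsum_ofReal_ne_top, fun h =>
    (ENNReal.summable_toReal h).congr fun i => ENNReal.toReal_ofReal (hf i)⟩

lemma eventually_log_div_log_le_add {g φ : ℝ → ℝ} {K μ ε : ℝ} (hφ : Tendsto φ atTop atTop)
    (hg : ∀ᶠ r in atTop, 0 < g r) (hgK : ∀ᶠ r in atTop, g r ≤ K * φ r ^ μ) (hε : 0 < ε) :
    ∀ᶠ r in atTop, log (g r) / log (φ r) ≤ μ + ε := by
  have hlog : Tendsto (fun r => log (φ r)) atTop atTop := tendsto_log_atTop.comp hφ
  have hsmall : ∀ᶠ r in atTop, log K / log (φ r) < ε :=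
    (tendsto_const_nhds.div_atTop hlog).eventually (gt_mem_nhds hε)
  filter_upwards [hg, hgK, hsmall, hφ.eventually_gt_atTop 1] with r hgr hgKr hKr hφr
  have hlogr : 0 < log (φ r) := log_pos hφr
  have hK : 0 < K := pos_of_mul_pos_left (hgr.trans_le hgKr) (by positivity)
  rw [div_lt_iff₀ hlogr] at hKr
  rw [div_le_iff₀ hlogr]
  calc log (g r) ≤ log (K * φ r ^ μ) := log_le_log hgr hgKr
    _ = log K + μ * log (φ r) := by rw [log_mul hK.ne' (by positivity), log_rpow (by linarith)]
    _ ≤ (μ + ε) * log (φ r) := by linarith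

lemma eventually_le_rpow_of_log_div_log_le {g φ : ℝ → ℝ} {c : ℝ} (hφ : Tendsto φ atTop atTop)
    (hg : ∀ᶠ r in atTop, 0 < g r) (hc : ∀ᶠ r in atTop, log (g r) / log (φ r) ≤ c) :
    ∀ᶠ r in atTop, g r ≤ φ r ^ c := by
  filter_upwards [hg, hc, hφ.eventually_gt_atTop 1] with r hgr hcr hφr
  rw [div_le_iff₀ (log_pos hφr)] at hcr
  rwa [← log_le_log_iff hgr (by positivity), log_rpow (by linarith)]

lemma limsup_eq_csInf_of_eventually_le {α : Type*} {l : Filter α} [l.NeBot] {f : α → ℝ}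
    {S : Set ℝ} (hf : ∀ᶠ x in l, 0 ≤ f x) (hne : S.Nonempty) (hbdd : BddBelow S)
    (hle : ∀ μ ∈ S, ∀ ε > 0, ∀ᶠ x in l, f x ≤ μ + ε)
    (hmem : ∀ c > 0, (∀ᶠ x in l, f x ≤ c) → ∀ μ > c, μ ∈ S) :
    limsup f l = sInf S := by
  obtain ⟨μ₀, hμ₀⟩ := hne
  have hbddAbove : IsBoundedUnder (· ≤ ·) l f := ⟨μ₀ + 1, hle μ₀ hμ₀ 1 one_pos⟩
  have hcobdd : IsCoboundedUnder (· ≤ ·) l f := IsBoundedUnder.isCoboundedUnder_le ⟨0, hf⟩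
  refine le_antisymm (le_csInf ⟨μ₀, hμ₀⟩ fun μ hμ => le_of_forall_pos_le_add fun ε hε =>
    limsup_le_of_le hcobdd (hle μ hμ ε hε)) (le_of_forall_gt_imp_ge_of_dense fun c hc => ?_)
  have hc0 : 0 < c := (le_limsup_of_frequently_le hf.frequently hbddAbove).trans_lt hc
  have hfc : ∀ᶠ x in l, f x ≤ c := (eventually_lt_of_limsup_lt hc hbddAbove).mono fun _ => le_of_lt
  exact le_of_forall_gt_imp_ge_of_dense fun μ hμ => csInf_le hbdd (hmem c hc0 hfc μ hμ)

lemma countingFun_nonneg (z : ℕ → ℂ) (r : ℝ) : 0 ≤ countingFun z r := Nat.cast_nonneg _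

section CountingFun

variable {z : ℕ → ℂ}

lemma finite_setOf_norm_le (hz : Tendsto (fun n => ‖z n‖) atTop atTop) (r : ℝ) :
    {n : ℕ | ‖z n‖ ≤ r}.Finite := by
  have h : ∀ᶠ n in cofinite, r < ‖z n‖ := Nat.cofinite_eq_atTop ▸ hz.eventually_gt_atTop r
  simpa [not_lt] using h

lemma countingFun_mono (hz : Tendsto (fun n => ‖z n‖) atTop atTop) :
    Monotone (countingFun z) := fun r s hrs => by
  simp only [countingFun, Nat.card_coe_set_eq]
  exact_mod_cast Set.ncard_le_ncard (fun n hn => le_trans hn hrs) (finite_setOf_norm_le hz s)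

lemma eventually_one_le_countingFun (hz : Tendsto (fun n => ‖z n‖) atTop atTop) :
    ∀ᶠ r in atTop, 1 ≤ countingFun z r := by
  filter_upwards [eventually_ge_atTop ‖z 0‖] with r hr
  simp only [countingFun, Nat.card_coe_set_eq, Nat.one_le_cast, Nat.one_le_iff_ne_zero]
  exact ((Set.ncard_pos (finite_setOf_norm_le hz r)).2 ⟨0, hr⟩).ne'

lemma ofReal_countingFun (hz : Tendsto (fun n => ‖z n‖) atTop atTop) (t : ℝ) :
    ENNReal.ofReal (countingFun z t) = ∑' n, (Ici ‖z n‖).indicator 1 t := by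
  have hind : ∀ n, (Ici ‖z n‖).indicator (1 : ℝ → ENNReal) t
      = {n : ℕ | ‖z n‖ ≤ t}.indicator 1 n := fun n => by
    by_cases h : ‖z n‖ ≤ t <;> simp [h]
  rw [tsum_congr hind, ← tsum_subtype]
  simp only [Pi.one_apply]
  rw [ENNReal.tsum_set_one,
    ← (finite_setOf_norm_le hz t).cast_ncard_eq, countingFun, Nat.card_coe_set_eq]
  simp

lemma lintegral_ofReal_countingFun_mul (hz : Tendsto (fun n => ‖z n‖) atTop atTop)
    (μ : Measure ℝ) {s : Set ℝ} {w : ℝ → ENNReal} (hw : Measurable w) :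
    ∫⁻ t in s, ENNReal.ofReal (countingFun z t) * w t ∂μ
      = ∑' n, ∫⁻ t in Ici ‖z n‖ ∩ s, w t ∂μ := by
  simp_rw [ofReal_countingFun hz, ← ENNReal.tsum_mul_right, ← indicator_mul_left, Pi.one_apply,
    one_mul]
  rw [lintegral_tsum fun n => (hw.indicator measurableSet_Ici).aemeasurable]
  refine tsum_congr fun n => ?_
  rw [lintegral_indicator measurableSet_Ici, Measure.restrict_restrict measurableSet_Ici]

end CountingFun

structure IsGrowthScale (φ : ℝ → ℝ) (R₀ : ℝ) : Prop where
  pos : ∀ r ≥ R₀, 0 < φ r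
  monotoneOn : MonotoneOn φ (Ioi R₀)
  tendsto : Tendsto φ atTop atTop
  differentiable : Differentiable ℝ φ

namespace IsGrowthScale

variable {φ : ℝ → ℝ} {R₀ : ℝ} {z : ℕ → ℂ}

lemma deriv_nonneg (hφ : IsGrowthScale φ R₀) {t : ℝ} (ht : R₀ < t) : 0 ≤ deriv φ t :=
  hφ.monotoneOn.deriv_nonneg_of_isOpen isOpen_Ioi ht

lemma deriv_div_rpow_nonneg (hφ : IsGrowthScale φ R₀) {t : ℝ} (ht : R₀ < t) (ν : ℝ) :
    0 ≤ deriv φ t / φ t ^ ν :=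
  div_nonneg (hφ.deriv_nonneg ht) (rpow_nonneg (hφ.pos t ht.le).le ν)

lemma measurable_deriv_div_rpow (hφ : IsGrowthScale φ R₀) (ν : ℝ) :
    Measurable fun t => deriv φ t / φ t ^ ν :=
  (measurable_deriv φ).div (hφ.differentiable.continuous.measurable.pow_const ν)

lemma integrableOn_Ioi_deriv_div_rpow_and_integral_eq (hφ : IsGrowthScale φ R₀) {ν b : ℝ}
    (hν : 0 < ν) (hb : R₀ < b) :
    IntegrableOn (fun t => deriv φ t / φ t ^ (ν + 1)) (Ioi b) ∧
      ∫ t in Ioi b, deriv φ t / φ t ^ (ν + 1) = φ b ^ (-ν) / ν := by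
  have hderiv : ∀ x ∈ Ici b, HasDerivAt (fun t => -φ t ^ (-ν) / ν)
      (deriv φ x / φ x ^ (ν + 1)) x := fun x hx => by
    have hx0 := hφ.pos x (hb.le.trans hx)
    refine (((hφ.differentiable x).hasDerivAt.rpow_const (p := -ν)
      (Or.inl hx0.ne')).neg.div_const ν).congr_deriv ?_
    rw [show -ν - 1 = -(ν + 1) by ring, rpow_neg hx0.le]
    field_simp
  have hnonneg : ∀ x ∈ Ioi b, 0 ≤ deriv φ x / φ x ^ (ν + 1) := fun x hx =>
    hφ.deriv_div_rpow_nonneg (hb.trans hx) _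
  have hlim : Tendsto (fun t => -φ t ^ (-ν) / ν) atTop (nhds 0) := by
    simpa using ((tendsto_rpow_neg_atTop hν).comp hφ.tendsto).neg.div_const ν
  refine ⟨integrableOn_Ioi_deriv_of_nonneg' hderiv hnonneg hlim, ?_⟩
  rw [integral_Ioi_of_hasDerivAt_of_nonneg' hderiv hnonneg hlim]
  ring

lemma lintegral_Ioi_deriv_div_rpow (hφ : IsGrowthScale φ R₀) {ν b : ℝ} (hν : 0 < ν)
    (hb : R₀ < b) :
    ∫⁻ t in Ioi b, ENNReal.ofReal (deriv φ t / φ t ^ (ν + 1))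
      = ENNReal.ofReal (φ b ^ (-ν) / ν) := by
  obtain ⟨hint, heq⟩ := hφ.integrableOn_Ioi_deriv_div_rpow_and_integral_eq hν hb
  rw [← heq, ofReal_integral_eq_lintegral_ofReal hint (ae_restrict_of_forall_mem measurableSet_Ioi
    fun t ht => hφ.deriv_div_rpow_nonneg (hb.trans ht) _)]

lemma lintegral_Ioi_countingFun_eq_tsum (hφ : IsGrowthScale φ R₀)
    (hz : Tendsto (fun n => ‖z n‖) atTop atTop) {μ a : ℝ} (hμ : 0 < μ) (ha : R₀ < a) :
    ∫⁻ t in Ioi a, ENNReal.ofReal (deriv φ t * countingFun z t / φ t ^ (μ + 1))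
      = ∑' n, ENNReal.ofReal (φ (max ‖z n‖ a) ^ (-μ) / μ) := by
  have hsplit : ∀ t, ENNReal.ofReal (deriv φ t * countingFun z t / φ t ^ (μ + 1))
      = ENNReal.ofReal (countingFun z t) * ENNReal.ofReal (deriv φ t / φ t ^ (μ + 1)) := fun t => by
    rw [← ENNReal.ofReal_mul (countingFun_nonneg z t), mul_div_assoc, mul_div_left_comm]
  rw [lintegral_congr hsplit,
    lintegral_ofReal_countingFun_mul hz _ (hφ.measurable_deriv_div_rpow _).ennreal_ofReal]
  refine tsum_congr fun n => ?_
  rw [Measure.restrict_congr_set ((Ioi_ae_eq_Ici (μ := volume)).symm.inter (ae_eq_refl (Ioi a))),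
    Ioi_inter_Ioi]
  exact hφ.lintegral_Ioi_deriv_div_rpow hμ (ha.trans_le (le_max_right _ _))

lemma summable_one_div_rpow_iff (hφ : IsGrowthScale φ R₀)
    (hz : Tendsto (fun n => ‖z n‖) atTop atTop) {μ a : ℝ} (hμ : 0 < μ) (ha : R₀ < a) :
    Summable (fun n => 1 / φ ‖z n‖ ^ μ) ↔ Summable (fun n => φ (max ‖z n‖ a) ^ (-μ) / μ) := by
  rw [← summable_mul_left_iff (inv_ne_zero hμ.ne')]
  refine summable_congr_atTop ?_
  filter_upwards [hz.eventually_ge_atTop a] with n hn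
  rw [max_eq_left hn, rpow_neg (hφ.pos _ (ha.le.trans hn)).le]
  ring

lemma deriv_mul_countingFun_div_rpow_nonneg (hφ : IsGrowthScale φ R₀) {t : ℝ} (ht : R₀ < t)
    (ν : ℝ) : 0 ≤ deriv φ t * countingFun z t / φ t ^ ν :=
  mul_div_right_comm (deriv φ t) _ _ ▸
    mul_nonneg (hφ.deriv_div_rpow_nonneg ht _) (countingFun_nonneg z t)

lemma measurable_deriv_mul_countingFun_div_rpow (hφ : IsGrowthScale φ R₀)
    (hz : Tendsto (fun n => ‖z n‖) atTop atTop) (ν : ℝ) :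
    Measurable fun t => deriv φ t * countingFun z t / φ t ^ ν :=
  ((measurable_deriv φ).mul (countingFun_mono hz).measurable).div
    (hφ.differentiable.continuous.measurable.pow_const ν)

lemma integrableOn_Ioi_iff_summable (hφ : IsGrowthScale φ R₀)
    (hz : Tendsto (fun n => ‖z n‖) atTop atTop) {μ a : ℝ} (hμ : 0 < μ) (ha : R₀ < a) :
    IntegrableOn (fun t => deriv φ t * countingFun z t / φ t ^ (μ + 1)) (Ioi a) ↔
      Summable (fun n => 1 / φ ‖z n‖ ^ μ) := by
  have hterm : ∀ n, 0 ≤ φ (max ‖z n‖ a) ^ (-μ) / μ := fun n =>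
    div_nonneg (rpow_nonneg (hφ.pos _ (ha.le.trans (le_max_right _ _))).le _) hμ.le
  rw [IntegrableOn, hφ.summable_one_div_rpow_iff hz hμ ha, summable_iff_tsum_ofReal_ne_top hterm,
    ← hφ.lintegral_Ioi_countingFun_eq_tsum hz hμ ha, lintegral_ofReal_ne_top_iff_integrable
      (hφ.measurable_deriv_mul_countingFun_div_rpow hz _).aestronglyMeasurable
      (ae_restrict_of_forall_mem measurableSet_Ioi fun t ht =>
        hφ.deriv_mul_countingFun_div_rpow_nonneg (ha.trans ht) _)]

lemma exists_countingFun_le_mul_rpow (hφ : IsGrowthScale φ R₀)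
    (hz : Tendsto (fun n => ‖z n‖) atTop atTop) {μ : ℝ} (hμ : 0 < μ)
    (hs : Summable (fun n => 1 / φ ‖z n‖ ^ μ)) :
    ∃ K, ∀ᶠ r in atTop, countingFun z r ≤ K * φ r ^ μ := by
  have ha : R₀ < R₀ + 1 := lt_add_one R₀
  have hF := (hφ.integrableOn_Ioi_iff_summable hz hμ ha).2 hs
  set I := ∫ t in Ioi (R₀ + 1), deriv φ t * countingFun z t / φ t ^ (μ + 1)
  refine ⟨μ * I, ?_⟩
  filter_upwards [eventually_gt_atTop (R₀ + 1)] with r hr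
  have hrR : R₀ < r := ha.trans hr
  have hφr : 0 < φ r := hφ.pos r hrR.le
  obtain ⟨hw, hw_eq⟩ := hφ.integrableOn_Ioi_deriv_div_rpow_and_integral_eq hμ hrR
  have key : countingFun z r * (φ r ^ (-μ) / μ) ≤ I := calc
    countingFun z r * (φ r ^ (-μ) / μ)
        = ∫ t in Ioi r, countingFun z r * (deriv φ t / φ t ^ (μ + 1)) := by
      rw [integral_const_mul, hw_eq]
    _ ≤ ∫ t in Ioi r, deriv φ t * countingFun z t / φ t ^ (μ + 1) := by
      refine setIntegral_mono_on (hw.const_mul _) (hF.mono_set (Ioi_subset_Ioi hr.le))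
        measurableSet_Ioi fun t ht => ?_
      rw [mul_div_right_comm, mul_comm _ (countingFun z t)]
      exact mul_le_mul_of_nonneg_right (countingFun_mono hz (le_of_lt ht))
        (hφ.deriv_div_rpow_nonneg (hrR.trans ht) _)
    _ ≤ I := setIntegral_mono_set hF
      (ae_restrict_of_forall_mem measurableSet_Ioi fun t ht =>
        hφ.deriv_mul_countingFun_div_rpow_nonneg (ha.trans ht) _)
      (Ioi_subset_Ioi hr.le).eventuallyLE
  calc countingFun z r = countingFun z r * (φ r ^ (-μ) / μ) * (μ * φ r ^ μ) := by
        rw [rpow_neg hφr.le]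
        field_simp
    _ ≤ I * (μ * φ r ^ μ) := mul_le_mul_of_nonneg_right key (by positivity)
    _ = μ * I * φ r ^ μ := by ring

lemma summable_of_eventually_countingFun_le_rpow (hφ : IsGrowthScale φ R₀)
    (hz : Tendsto (fun n => ‖z n‖) atTop atTop) {c μ : ℝ} (hc : 0 ≤ c) (hcμ : c < μ)
    (h : ∀ᶠ r in atTop, countingFun z r ≤ φ r ^ c) :
    Summable (fun n => 1 / φ ‖z n‖ ^ μ) := by
  obtain ⟨r₀, hr₀⟩ := eventually_atTop.1 h
  have ha : R₀ < max R₀ r₀ + 1 := (le_max_left _ _).trans_lt (lt_add_one _)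
  rw [← hφ.integrableOn_Ioi_iff_summable hz (hc.trans_lt hcμ) ha]
  refine (hφ.integrableOn_Ioi_deriv_div_rpow_and_integral_eq (sub_pos.2 hcμ) ha).1.mono'
    (hφ.measurable_deriv_mul_countingFun_div_rpow hz _).aestronglyMeasurable
    (ae_restrict_of_forall_mem measurableSet_Ioi fun t ht => ?_)
  have htR : R₀ < t := ha.trans ht
  have hφt : 0 < φ t := hφ.pos t htR.le
  rw [norm_of_nonneg (hφ.deriv_mul_countingFun_div_rpow_nonneg htR _)]
  calc deriv φ t * countingFun z t / φ t ^ (μ + 1)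
      ≤ deriv φ t * φ t ^ c / φ t ^ (μ + 1) := by
        gcongr
        · exact hφ.deriv_nonneg htR
        · exact hr₀ t ((le_max_right _ _).trans (lt_add_one _).le |>.trans ht.le)
    _ = deriv φ t / φ t ^ (μ - c + 1) := by
        rw [mul_div_assoc, ← rpow_sub hφt, div_eq_mul_inv, ← rpow_neg hφt.le]
        ring_nf

end IsGrowthScale

/-- For a sequence `{z_n}` with `|z_n| → ∞` and counting function `n(r)`:
for `μ > 0` the sum `Σ 1/φ(|z_n|)^μ` converges iff the integral
`∫^∞ φ'(t) n(t)/φ(t)^{μ+1} dt` converges; consequently the φ-order of `n(r)`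
equals the φ-exponent of convergence of `{z_n}`. -/
theorem counting_sum_integral (R₀ : ℝ) (φ : ℝ → ℝ) (z : ℕ → ℂ)
    (hz : Tendsto (fun n => ‖z n‖) atTop atTop)
    (hφbound : ∀ r ≥ R₀, 0 < φ r ∧ log r ≤ φ r ∧ φ r ≤ r)
    (hφmono : MonotoneOn φ (Ioi R₀))
    (hφunb : Tendsto φ atTop atTop)
    (hφdiff : Differentiable ℝ φ) :
    (∀ μ > (0:ℝ),
      (Summable (fun n => 1 / φ (‖z n‖) ^ μ) ↔
        ∃ a > R₀, IntegrableOn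
          (fun t => deriv φ t * countingFun z t / φ t ^ (μ + 1)) (Ioi a))) ∧
    ((∃ μ > (0:ℝ), Summable (fun n => 1 / φ (‖z n‖) ^ μ)) →
      Filter.limsup (fun r => log (countingFun z r) / log (φ r)) atTop =
        sInf {μ : ℝ | 0 < μ ∧ Summable (fun n => 1 / φ (‖z n‖) ^ μ)}) ∧
    ((∀ μ > (0:ℝ), ¬ Summable (fun n => 1 / φ (‖z n‖) ^ μ)) →
      ¬ IsBoundedUnder (· ≤ ·) atTop
        (fun r => log (countingFun z r) / log (φ r))) := by
  have hφ : IsGrowthScale φ R₀ := ⟨fun r hr => (hφbound r hr).1, hφmono, hφunb, hφdiff⟩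
  have hn : ∀ᶠ r in atTop, 0 < countingFun z r :=
    (eventually_one_le_countingFun hz).mono fun _ h => one_pos.trans_le h
  have hmem : ∀ c > 0, (∀ᶠ r in atTop, log (countingFun z r) / log (φ r) ≤ c) →
      ∀ μ > c, 0 < μ ∧ Summable (fun n => 1 / φ (‖z n‖) ^ μ) := fun c hc hle μ hcμ =>
    ⟨hc.trans hcμ, hφ.summable_of_eventually_countingFun_le_rpow hz hc.le hcμ
      (eventually_le_rpow_of_log_div_log_le hφunb hn hle)⟩
  refine ⟨fun μ hμ => ⟨fun hs => ⟨R₀ + 1, lt_add_one R₀,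
      (hφ.integrableOn_Ioi_iff_summable hz hμ (lt_add_one R₀)).2 hs⟩,
    fun ⟨a, ha, hint⟩ => (hφ.integrableOn_Ioi_iff_summable hz hμ ha).1 hint⟩, ?_, ?_⟩
  · rintro ⟨μ₀, hμ₀, hs₀⟩
    refine limsup_eq_csInf_of_eventually_le ?_ ⟨μ₀, hμ₀, hs₀⟩ ⟨0, fun μ hμ => hμ.1.le⟩
      (fun μ ⟨hμ, hs⟩ ε hε => ?_) hmem
    · filter_upwards [eventually_one_le_countingFun hz, hφunb.eventually_gt_atTop 1]
        with r hnr hφr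
      exact div_nonneg (log_nonneg hnr) (log_pos hφr).le
    · obtain ⟨K, hK⟩ := hφ.exists_countingFun_le_mul_rpow hz hμ hs
      exact eventually_log_div_log_le_add hφunb hn hK hε
  · rintro hns ⟨b, hb⟩
    have hc : (0 : ℝ) < max b 1 := one_pos.trans_le (le_max_right b 1)
    exact hns _ (hc.trans (lt_add_one _)) (hmem _ hc
      (hb.mono fun _ h => h.trans (le_max_left b 1)) _ (lt_add_one _)).2
end

section
/- Let φ be non-decreasing, unbounded with log r ≤ φ(r) ≤ r, and suppose the limit β = lim_{r→∞} (log log r)/(log φ(r)) exists with β > 0. If f is a function with finite φ-order ρ_φ(f) = limsup_{r→∞} (log T(r))/(log φ(r)) < ∞, where T : (0,∞) → (0,∞) is non-decreasing and unbounded, then the classical order ρ(T) = limsup_{r→∞} (log T(r))/(log r) equals 0. -/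
open Set Filter Real

/-- If `(log log r)/(log φ(r)) → β > 0` and `T` has finite φ-order, then the
classical order of `T` is zero. -/
theorem beta_pos_finite_phi_order_implies_zero_order (R₀ β : ℝ) (φ T : ℝ → ℝ)
    (hφbound : ∀ r ≥ R₀, 0 < φ r ∧ log r ≤ φ r ∧ φ r ≤ r)
    (hφmono : MonotoneOn φ (Ioi R₀))
    (hφunb : Tendsto φ atTop atTop)
    (hβ : Tendsto (fun r => log (log r) / log (φ r)) atTop (nhds β))
    (hβpos : 0 < β)
    (hTmono : MonotoneOn T (Ioi (0:ℝ)))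
    (hTpos : ∀ r > (0:ℝ), 0 < T r)
    (hTunb : Tendsto T atTop atTop)
    (hfin : IsBoundedUnder (· ≤ ·) atTop (fun r => log (T r) / log (φ r))) :
    Filter.limsup (fun r => log (T r) / log r) atTop = 0 := by
  obtain ⟨M, hM⟩ := hfin
  simp only [eventually_map] at hM
  set M' : ℝ := max M 1 with hM'def
  have hM'pos : 0 < M' := lt_of_lt_of_le one_pos (le_max_right _ _)
  have hM' : ∀ᶠ r in atTop, log (T r) / log (φ r) ≤ M' :=
    hM.mono fun r hr => hr.trans (le_max_left _ _)
  -- eventually log φ r > 0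
  have hφpos : ∀ᶠ r in atTop, 0 < log (φ r) :=
    (hφunb.eventually_ge_atTop 2).mono fun r hr =>
      log_pos (lt_of_lt_of_le one_lt_two hr)
  -- eventually log T r ≥ 0
  have hT0 : ∀ᶠ r in atTop, 0 ≤ log (T r) :=
    (hTunb.eventually_ge_atTop 1).mono fun r hr => log_nonneg hr
  -- eventually log log r / log φ r ≥ β/2
  have hβ2 : ∀ᶠ r in atTop, β / 2 ≤ log (log r) / log (φ r) :=
    hβ.eventually (eventually_ge_nhds (half_lt_self hβpos))
  have hlogr : ∀ᶠ r in atTop, 0 < log r :=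
    (eventually_ge_atTop 2).mono fun r hr => log_pos (lt_of_lt_of_le one_lt_two hr)
  -- combine: 0 ≤ log T r / log r ≤ (2*M'/β) * (log log r / log r)
  have key : ∀ᶠ r in atTop,
      log (T r) / log r ≤ (2 * M' / β) * (log (log r) / log r) := by
    filter_upwards [hM', hφpos, hβ2, hlogr] with r h1 h2 h3 h4
    have hT : log (T r) ≤ M' * log (φ r) := (div_le_iff₀ h2).mp h1
    have hφle : log (φ r) ≤ (2 / β) * log (log r) := by
      have h5 := (le_div_iff₀ h2).mp h3
      calc log (φ r) = (2 / β) * (β / 2 * log (φ r)) := by field_simp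
        _ ≤ (2 / β) * log (log r) :=
            mul_le_mul_of_nonneg_left h5 (by positivity)
    have : log (T r) ≤ (2 * M' / β) * log (log r) := by
      calc log (T r) ≤ M' * log (φ r) := hT
        _ ≤ M' * ((2 / β) * log (log r)) := by
            apply mul_le_mul_of_nonneg_left hφle hM'pos.le
        _ = (2 * M' / β) * log (log r) := by ring
    rw [div_le_iff₀ h4, mul_assoc, div_mul_cancel₀ _ h4.ne']
    exact this
  have hlow : ∀ᶠ r in atTop, (0:ℝ) ≤ log (T r) / log r := by
    filter_upwards [hT0, hlogr] with r h1 h2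
    positivity
  -- log log r / log r → 0
  have hll : Tendsto (fun r => log (log r) / log r) atTop (nhds 0) :=
    (Real.isLittleO_log_id_atTop.tendsto_div_nhds_zero).comp tendsto_log_atTop
  have hup : Tendsto (fun r => (2 * M' / β) * (log (log r) / log r)) atTop (nhds 0) := by
    simpa using hll.const_mul (2 * M' / β)
  have hlim : Tendsto (fun r => log (T r) / log r) atTop (nhds 0) :=
    tendsto_of_tendsto_of_tendsto_of_le_of_le' tendsto_const_nhds hup hlow key
  exact hlim.limsup_eq
end
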